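/- arXiv:1611.07647 — 5 statements merged into one kernel-verified Lean document; each statement's English description precedes it below -/
import Mathlib

section
/- Let k ≥ 2 and 2 ≤ s, ℓ ≤ k be integers and M ≥ 1 an integer. Let q be a prime power and let f(Z) = Σ_{i=0}^{s−1} a_i(T) Z^i and g(Z) = Σ_{i=0}^{ℓ−1} b_i(T) Z^i be polynomials in Z with coefficients a_i, b_i ∈ F_q[T], such that a_{s−1} ≠ 0, b_{ℓ−1} ≠ 0, and deg_T a_i < (k−i)M and deg_T b_i < (k−i)M for all i. Then the resultant (with respect to Z) of f and g, which is a polynomial in F_q[T], satisfies deg_T Res(f,g) ≤ (k² − 1)M. -/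
/-- The Sylvester matrix of two polynomials `f` and `g` over a commutative ring `R`,
with respect to prescribed sizes `m` and `n` (intended to be the degrees of `f` and `g`):
the `(n + m) × (n + m)` matrix whose first `n` rows are the successively shifted
coefficient vectors of `f`, and whose remaining `m` rows are the successively shifted
coefficient vectors of `g`. -/
noncomputable def sylvesterMatrix {R : Type*} [CommRing R] (f g : Polynomial R)
    (m n : ℕ) : Matrix (Fin (n + m)) (Fin (n + m)) R :=
  Matrix.of fun i j =>
    if (i : ℕ) < n then
      (if (i : ℕ) ≤ (j : ℕ) then f.coeff ((j : ℕ) - (i : ℕ)) else 0)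
    else
      (if (i : ℕ) - n ≤ (j : ℕ) then g.coeff ((j : ℕ) - ((i : ℕ) - n)) else 0)

/-- The resultant of two polynomials `f` and `g` over a commutative ring `R`:
the determinant of their Sylvester matrix (taken with respect to their degrees). -/
noncomputable def resultant {R : Type*} [CommRing R] (f g : Polynomial R) : R :=
  (sylvesterMatrix f g f.natDegree g.natDegree).det


/-! Give `T` weight `1` and `Z` weight `M`, so that every monomial of `f` and `g` has weight at
most `kM`. In the Sylvester matrix the entry in row `r` and column `j` then has `T`-degree at
most `u r - jM` for suitable row weights `u`, so every term of the Leibniz expansion of the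
determinant has degree at most `∑ u - M ∑ j = (m + n)kM - mnM`, where `m = s - 1` and `n = ℓ - 1`
are the `Z`-degrees. This is at most `(k² - 1)M` because `(k - m)(k - n) ≥ 1`. -/

theorem Nat.add_mul_sub_mul_le_sq_sub_one {a b k : ℕ} (ha : a < k) (hb : b < k) :
    (a + b) * k - a * b ≤ k ^ 2 - 1 := by
  have hpos : 1 ≤ (k - a) * (k - b) := Nat.mul_pos (by omega) (by omega)
  zify [ha.le, hb.le] at hpos
  have hk : 1 ≤ k ^ 2 := Nat.one_le_pow _ _ (by omega)
  rw [Nat.sub_le_iff_le_add]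
  zify [hk]
  linarith

section

open Polynomial

namespace Matrix

variable {n R : Type*} [Fintype n] [DecidableEq n] [CommRing R]

theorem natDegree_det_le_of_natDegree_le_add (A : Matrix n n R[X]) (u v : n → ℤ)
    (h : ∀ i j, A i j ≠ 0 → ((A i j).natDegree : ℤ) ≤ u i + v j) :
    A.det.natDegree ≤ (∑ i, u i + ∑ j, v j).toNat := by
  rw [det_apply]
  refine natDegree_sum_le_of_forall_le _ _ fun σ _ => (natDegree_smul_le _ _).trans ?_
  by_cases hzero : ∃ i, A (σ i) i = 0
  · obtain ⟨i, hi⟩ := hzero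
    rw [Finset.prod_eq_zero (f := fun j => A (σ j) j) (Finset.mem_univ i) hi, natDegree_zero]
    exact Nat.zero_le _
  push Not at hzero
  suffices ((∏ i, A (σ i) i).natDegree : ℤ) ≤ ∑ i, u i + ∑ j, v j by omega
  calc ((∏ i, A (σ i) i).natDegree : ℤ) ≤ ∑ i, ((A (σ i) i).natDegree : ℤ) := by
        exact_mod_cast natDegree_prod_le _ _
    _ ≤ ∑ i, (u (σ i) + v i) := Finset.sum_le_sum fun i _ => h _ _ (hzero i)
    _ = ∑ i, u i + ∑ j, v j := by rw [Finset.sum_add_distrib, Equiv.sum_comp σ u]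

end Matrix

variable {R : Type*} [CommRing R]

theorem natDegree_det_sylvesterMatrix_le (f g : R[X][X]) (m n w d e : ℕ)
    (hf : ∀ i, f.coeff i ≠ 0 → (f.coeff i).natDegree + i * w ≤ d)
    (hg : ∀ i, g.coeff i ≠ 0 → (g.coeff i).natDegree + i * w ≤ e) :
    (sylvesterMatrix f g m n).det.natDegree ≤ n * d + m * e - m * n * w := by
  set u : Fin (n + m) → ℤ := fun r =>
    if (r : ℕ) < n then d + (r : ℕ) * w else e + ((r : ℕ) - n : ℕ) * w with hu
  set v : Fin (n + m) → ℤ := fun j => -((j : ℕ) * w : ℤ) with hv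
  have hentry : ∀ r j, sylvesterMatrix f g m n r j ≠ 0 →
      ((sylvesterMatrix f g m n r j).natDegree : ℤ) ≤ u r + v j := by
    intro r j hne
    simp only [sylvesterMatrix, Matrix.of_apply, hu, hv] at hne ⊢
    split_ifs at hne ⊢ with hrn hrj hrj
    · have := hf _ hne
      zify [hrj] at this
      linear_combination this
    · exact absurd rfl hne
    · have := hg _ hne
      zify [hrj] at this
      linear_combination this
    · exact absurd rfl hne
  have hdiag : ∀ r, u r + v r = if (r : ℕ) < n then (d : ℤ) else e - n * w := by
    intro r
    simp only [hu, hv]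
    split_ifs with hrn
    · ring
    · push_cast [Nat.cast_sub (not_lt.mp hrn)]
      ring
  have hsum : ∑ r, u r + ∑ j, v j = ((n * d + m * e : ℕ) : ℤ) - ((m * n * w : ℕ) : ℤ) := by
    rw [← Finset.sum_add_distrib, Finset.sum_congr rfl fun r _ => hdiag r, Fin.sum_univ_add]
    simp only [Fin.val_castAdd, Fin.is_lt, if_true, Fin.val_natAdd, add_lt_iff_neg_left,
      not_lt_zero, if_false, Finset.sum_const, Finset.card_univ, Fintype.card_fin,
      nsmul_eq_mul, Nat.cast_add, Nat.cast_mul]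
    ring
  simpa only [hsum, Int.toNat_sub] using
    (sylvesterMatrix f g m n).natDegree_det_le_of_natDegree_le_add u v hentry

theorem natDegree_coeff_add_mul_le_of_degree_lt {f : R[X][X]} {k s M : ℕ} (hsk : s ≤ k)
    (hdeg : f.natDegree < s)
    (hcoeff : ∀ i < s, (f.coeff i).degree < (((k - i) * M : ℕ) : WithBot ℕ))
    (i : ℕ) (hi : f.coeff i ≠ 0) : (f.coeff i).natDegree + i * M ≤ k * M := by
  have his : i < s := (le_natDegree_of_ne_zero hi).trans_lt hdeg
  have hlt := (natDegree_lt_iff_degree_lt hi).mpr (hcoeff i his)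
  calc (f.coeff i).natDegree + i * M ≤ (k - i) * M + i * M := by omega
    _ = k * M := by rw [← add_mul, Nat.sub_add_cancel (his.le.trans hsk)]

end

theorem degree_resultant_le_general
    (F : Type) [Field F]
    (k s ℓ M : ℕ) (hs2 : 2 ≤ s) (hsk : s ≤ k) (hl2 : 2 ≤ ℓ) (hlk : ℓ ≤ k)
    (f g : Polynomial (Polynomial F))
    (hfdeg : f.natDegree = s - 1)
    (hgdeg : g.natDegree = ℓ - 1)
    (hfcoeff : ∀ i < s, (f.coeff i).degree < (((k - i) * M : ℕ) : WithBot ℕ))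
    (hgcoeff : ∀ i < ℓ, (g.coeff i).degree < (((k - i) * M : ℕ) : WithBot ℕ)) :
    (resultant f g).natDegree ≤ (k ^ 2 - 1) * M := by
  have hf := natDegree_coeff_add_mul_le_of_degree_lt hsk (by omega) hfcoeff
  have hg := natDegree_coeff_add_mul_le_of_degree_lt hlk (by omega) hgcoeff
  set m := f.natDegree
  set n := g.natDegree
  calc (resultant f g).natDegree ≤ n * (k * M) + m * (k * M) - m * n * M :=
        natDegree_det_sylvesterMatrix_le f g m n M _ _ hf hg
    _ = ((m + n) * k - m * n) * M := by rw [Nat.sub_mul]; ring_nf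
    _ ≤ (k ^ 2 - 1) * M :=
        Nat.mul_le_mul_right _ (Nat.add_mul_sub_mul_le_sq_sub_one (by omega) (by omega))

/-- Let `k ≥ 2`, `2 ≤ s, ℓ ≤ k` and `M ≥ 1` be integers, `F` a finite
field. Let `f(Z) = Σ_{i=0}^{s−1} aᵢ(T) Zⁱ` and `g(Z) = Σ_{i=0}^{ℓ−1} bᵢ(T) Zⁱ` be
polynomials in `Z` with coefficients `aᵢ, bᵢ ∈ F[T]` such that `a_{s−1} ≠ 0`,
`b_{ℓ−1} ≠ 0`, and `deg_T aᵢ < (k−i)M`, `deg_T bᵢ < (k−i)M` for all `i`. Then the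
resultant (with respect to `Z`) of `f` and `g`, an element of `F[T]`, satisfies
`deg_T Res(f, g) ≤ (k² − 1)M`. -/
theorem degree_resultant_le
    (F : Type) [Field F] [Fintype F]
    (k s ℓ M : ℕ) (hk : 2 ≤ k) (hs2 : 2 ≤ s) (hsk : s ≤ k) (hl2 : 2 ≤ ℓ) (hlk : ℓ ≤ k)
    (hM : 1 ≤ M)
    (f g : Polynomial (Polynomial F))
    (hfdeg : f.natDegree = s - 1) (hflead : f.coeff (s - 1) ≠ 0)
    (hgdeg : g.natDegree = ℓ - 1) (hglead : g.coeff (ℓ - 1) ≠ 0)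
    (hfcoeff : ∀ i < s, (f.coeff i).degree < (((k - i) * M : ℕ) : WithBot ℕ))
    (hgcoeff : ∀ i < ℓ, (g.coeff i).degree < (((k - i) * M : ℕ) : WithBot ℕ)) :
    (resultant f g).natDegree ≤ (k ^ 2 - 1) * M :=
  degree_resultant_le_general F k s ℓ M hs2 hsk hl2 hlk f g hfdeg hgdeg hfcoeff hgcoeff
end

section
/- There is an absolute constant c₀ > 0 such that for every prime power q and every nonzero polynomial f ∈ F_q[T] of degree s ≥ 2, the number of monic divisors of f in F_q[T] is at most q^{c₀ s / log s}. -/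
/-!
A monic divisor of `f` is determined by its multiset of monic irreducible factors, a
sub-multiset of the factorization `∏ pᵉᵖ` of `f`, so there are at most `∏ (eₚ + 1)` of them.
Split the factors at a degree threshold `D`. There are at most `D q^(D-1)` monic polynomials of
degree `< D`, each contributing a factor `eₚ + 1 ≤ s + 1`; each factor of degree `≥ D` uses up
`D` of the degree `s`, so these contribute at most `2^(s/D)`. Taking `D ≈ log s / (2 log q)`
makes `q^(D-1) ≤ √s`, and both contributions are then `q^(O(s / log s))`.
-/

open Polynomial UniqueFactorizationMonoid Finset Real

namespace Multiset

variable {α : Type*} [DecidableEq α]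

theorem card_Iic_filter_mul_card_Iic_filter_not (m : Multiset α) (p : α → Prop)
    [DecidablePred p] :
    #(Finset.Iic (m.filter p)) * #(Finset.Iic (m.filter (¬ p ·))) = #(Finset.Iic m) := by
  simp only [card_Iic, toFinset_filter]
  rw [← Finset.prod_filter_mul_prod_filter_not m.toFinset p]
  congr 1 <;> refine Finset.prod_congr rfl fun a ha => ?_ <;>
    rw [count_filter, if_pos (Finset.mem_filter.1 ha).2]

theorem card_Iic_le_succ_pow (m : Multiset α) : #(Finset.Iic m) ≤ (card m + 1) ^ #m.toFinset := by
  rw [card_Iic]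
  exact Finset.prod_le_pow_card _ _ _ fun a _ => Nat.succ_le_succ (count_le_card a m)

theorem card_Iic_le_two_pow (m : Multiset α) : #(Finset.Iic m) ≤ 2 ^ card m :=
  calc #(Finset.Iic m) ≤ #m.powerset.toFinset :=
        Finset.card_le_card fun t ht => by simpa using Finset.mem_Iic.1 ht
    _ ≤ 2 ^ card m := (card_powerset m) ▸ toFinset_card_le _

end Multiset

namespace Polynomial

section Field

variable {K : Type*} [Field K] [DecidableEq K]

theorem monic_of_mem_normalizedFactors {f p : K[X]} (hp : p ∈ normalizedFactors f) : p.Monic := by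
  have hp0 := (irreducible_of_normalized_factor p hp).ne_zero
  simpa [normalize_normalized_factor p hp] using monic_normalize hp0

theorem Monic.prod_normalizedFactors {g : K[X]} (hg : g.Monic) : (normalizedFactors g).prod = g := by
  rw [prod_normalizedFactors_eq hg.ne_zero, hg.normalize_eq_self]

theorem sum_natDegree_normalizedFactors {f : K[X]} (hf : f ≠ 0) :
    ((normalizedFactors f).map natDegree).sum = f.natDegree := by
  conv_rhs => rw [← leadingCoeff_mul_prod_normalizedFactors f]
  rw [natDegree_C_mul (leadingCoeff_ne_zero.2 hf),
    natDegree_multiset_prod_of_monic _ fun p hp => monic_of_mem_normalizedFactors hp]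

theorem mul_card_le_natDegree_of_le_normalizedFactors {f : K[X]} (hf : f ≠ 0) {D : ℕ}
    {t : Multiset K[X]} (ht : t ≤ normalizedFactors f) (hD : ∀ p ∈ t, D ≤ p.natDegree) :
    D * Multiset.card t ≤ f.natDegree := by
  obtain ⟨u, hu⟩ := Multiset.le_iff_exists_add.1 ht
  have hsum : Multiset.card t • D ≤ (t.map natDegree).sum :=
    Multiset.card_map natDegree t ▸ Multiset.card_nsmul_le_sum (by simpa using hD)
  rw [← sum_natDegree_normalizedFactors hf, hu, Multiset.map_add, Multiset.sum_add]
  rw [smul_eq_mul] at hsum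
  lia

theorem natCard_monic_dvd_le_card_Iic {f : K[X]} (hf : f ≠ 0) :
    Nat.card {g : K[X] // g.Monic ∧ g ∣ f} ≤ #(Iic (normalizedFactors f)) := by
  rw [← Nat.card_eq_finsetCard]
  refine Nat.card_le_card_of_injective
    (fun g => ⟨normalizedFactors g.1, Finset.mem_Iic.2
      ((dvd_iff_normalizedFactors_le_normalizedFactors g.2.1.ne_zero hf).1 g.2.2)⟩) ?_
  rintro ⟨g₁, hg₁, _⟩ ⟨g₂, hg₂, _⟩ h
  simpa [hg₁.prod_normalizedFactors, hg₂.prod_normalizedFactors] using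
    congrArg (fun m : Iic (normalizedFactors f) => m.1.prod) h

end Field

section Finite

variable {R : Type*} [Semiring R]

theorem injective_coeff_natDegree_of_monic_natDegree_lt (D : ℕ) :
    Function.Injective fun p : {p : R[X] // p.Monic ∧ p.natDegree < D} =>
      ((fun i : Fin (D - 1) => p.1.coeff i), (⟨p.1.natDegree, p.2.2⟩ : Fin D)) := by
  rintro ⟨p, hp, hpD⟩ ⟨r, hr, _⟩ h
  simp only [Prod.mk.injEq, Fin.mk.injEq, funext_iff] at h
  obtain ⟨hcoeff, hdeg⟩ := h
  ext1
  ext i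
  rcases lt_trichotomy i p.natDegree with hi | rfl | hi
  · exact hcoeff ⟨i, by lia⟩
  · rw [hp.coeff_natDegree, hdeg, hr.coeff_natDegree]
  · rw [coeff_eq_zero_of_natDegree_lt hi, coeff_eq_zero_of_natDegree_lt (hdeg ▸ hi)]

variable [Fintype R]

theorem finite_setOf_monic_natDegree_lt (D : ℕ) :
    {p : R[X] | p.Monic ∧ p.natDegree < D}.Finite :=
  Finite.of_injective _ (injective_coeff_natDegree_of_monic_natDegree_lt D)

theorem ncard_setOf_monic_natDegree_lt_le (D : ℕ) :
    {p : R[X] | p.Monic ∧ p.natDegree < D}.ncard ≤ D * Fintype.card R ^ (D - 1) := by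
  calc Nat.card {p : R[X] // p.Monic ∧ p.natDegree < D}
      ≤ Nat.card ((Fin (D - 1) → R) × Fin D) :=
        Nat.card_le_card_of_injective _ (injective_coeff_natDegree_of_monic_natDegree_lt D)
    _ = D * Fintype.card R ^ (D - 1) := by simp [mul_comm]

end Finite

theorem natCard_monic_dvd_le {F : Type*} [Field F] [Fintype F] {f : F[X]} (hf : f ≠ 0) {D : ℕ}
    (hD : 0 < D) :
    Nat.card {g : F[X] // g.Monic ∧ g ∣ f} ≤
      (f.natDegree + 1) ^ (D * Fintype.card F ^ (D - 1)) * 2 ^ (f.natDegree / D) := by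
  classical
  set m := normalizedFactors f
  set small := m.filter (natDegree · < D)
  set large := m.filter (¬ natDegree · < D)
  have hcard : Multiset.card m ≤ f.natDegree := by
    simpa using mul_card_le_natDegree_of_le_normalizedFactors hf le_rfl fun p hp =>
      (irreducible_of_normalized_factor p hp).natDegree_pos
  have hsmall : #small.toFinset ≤ D * Fintype.card F ^ (D - 1) := by
    refine le_trans ?_ (ncard_setOf_monic_natDegree_lt_le D)
    rw [← Set.ncard_coe_finset]
    refine Set.ncard_le_ncard (fun p hp => ?_) (finite_setOf_monic_natDegree_lt D)
    obtain ⟨hpm, hpD⟩ := Multiset.mem_filter.1 (Multiset.mem_toFinset.1 hp)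
    exact ⟨monic_of_mem_normalizedFactors hpm, hpD⟩
  have hlarge : Multiset.card large ≤ f.natDegree / D := by
    rw [Nat.le_div_iff_mul_le hD, mul_comm]
    exact mul_card_le_natDegree_of_le_normalizedFactors hf (Multiset.filter_le _ _) fun p hp =>
      not_lt.1 (Multiset.mem_filter.1 hp).2
  calc Nat.card {g : F[X] // g.Monic ∧ g ∣ f} ≤ #(Iic m) := natCard_monic_dvd_le_card_Iic hf
    _ = #(Iic small) * #(Iic large) := (m.card_Iic_filter_mul_card_Iic_filter_not _).symm
    _ ≤ (Multiset.card small + 1) ^ #small.toFinset * 2 ^ Multiset.card large :=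
        Nat.mul_le_mul small.card_Iic_le_succ_pow large.card_Iic_le_two_pow
    _ ≤ (f.natDegree + 1) ^ (D * Fintype.card F ^ (D - 1)) * 2 ^ (f.natDegree / D) := by
        have : Multiset.card small ≤ f.natDegree :=
          (Multiset.card_le_card (Multiset.filter_le _ _)).trans hcard
        gcongr
        · lia
        · exact one_le_two

end Polynomial

namespace Real

theorem pow_le_sqrt_of_mul_log_le {x y : ℝ} (hx : 0 < x) (hy : 0 < y) {n : ℕ}
    (h : n * log x ≤ log y / 2) : x ^ n ≤ √y := by
  rwa [← log_le_log_iff (by positivity) (by positivity), log_pow, log_sqrt hy.le]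

theorem log_pow_three_le_sqrt {x : ℝ} (hx : 0 ≤ x) : log x ^ 3 ≤ 216 * √x := by
  rcases le_total (log x) 0 with hlog | hlog
  · exact (Odd.pow_nonpos (by decide) hlog).trans (by positivity)
  have hroot : (x ^ (6⁻¹ : ℝ)) ^ 3 = √x := by
    rw [sqrt_eq_rpow, ← rpow_natCast, ← rpow_mul hx]
    norm_num
  calc log x ^ 3 ≤ (x ^ (6⁻¹ : ℝ) / 6⁻¹) ^ 3 := by
        gcongr
        exact log_le_rpow_div hx (by norm_num)
    _ = 216 * √x := by rw [← hroot]; ring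

end Real

theorem natCast_mul_pow_mul_log_le {q s : ℝ} (hq : 2 ≤ q) (hs : 2 ≤ s) {D : ℕ}
    (hD : D ≤ log s / (2 * log q) + 1) :
    D * q ^ (D - 1) * log (s + 1) * log s ≤ 2600 * s * log q := by
  have hlog2 : 1 / 2 < log 2 := by linarith [log_two_gt_d9]
  have hlq : log 2 ≤ log q := log_le_log two_pos hq
  have hls : log 2 ≤ log s := log_le_log two_pos hs
  have hlq0 : 0 < log q := by linarith
  have hls0 : 0 < log s := by linarith
  have hpow : q ^ (D - 1) ≤ √s := by
    refine pow_le_sqrt_of_mul_log_le (by positivity) (by positivity) ?_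
    rcases Nat.eq_zero_or_pos D with rfl | hD0
    · simpa using half_pos hls0 |>.le
    rw [Nat.cast_sub hD0, Nat.cast_one, ← le_div_iff₀ hlq0]
    calc (D : ℝ) - 1 ≤ log s / (2 * log q) := by linarith
      _ = log s / 2 / log q := by ring
  have hD' : (D : ℝ) ≤ 3 * log s := by
    have : log s / (2 * log q) ≤ log s := div_le_self hls0.le (by linarith)
    linarith
  have hsucc : log (s + 1) ≤ 2 * log s :=
    calc log (s + 1) ≤ log (s ^ 2) := log_le_log (by positivity) (by nlinarith)
      _ = 2 * log s := by rw [log_pow]; norm_num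
  have hsucc0 : 0 ≤ log (s + 1) := log_nonneg (by linarith)
  calc D * q ^ (D - 1) * log (s + 1) * log s
      ≤ (3 * log s) * √s * (2 * log s) * log s := by gcongr
    _ = 6 * log s ^ 3 * √s := by ring
    _ ≤ 6 * (216 * √s) * √s := by gcongr; exact log_pow_three_le_sqrt (by linarith)
    _ = 1296 * (√s * √s) := by ring
    _ = 1296 * s := by rw [mul_self_sqrt (by linarith)]
    _ ≤ 2600 * s * log q := by nlinarith

theorem natCast_div_mul_log_two_le {q : ℝ} {s D : ℕ} (hq : 1 < q) (hs : 1 < s)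
    (hD : log s / (2 * log q) ≤ D) :
    ((s / D : ℕ) : ℝ) * log 2 * log s ≤ 2 * s * log q := by
  have hlq : 0 < log q := log_pos hq
  have hls : 0 < log s := log_pos (by exact_mod_cast hs)
  have hD0 : (0 : ℝ) < D := lt_of_lt_of_le (by positivity) hD
  have hLD : log s ≤ 2 * log q * D := by rwa [div_le_iff₀ (by positivity), mul_comm] at hD
  calc ((s / D : ℕ) : ℝ) * log 2 * log s ≤ s / D * 1 * (2 * log q * D) := by
        gcongr
        · exact Nat.cast_div_le
        · linarith [log_two_lt_d9]
    _ = 2 * s * log q := by field_simp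

theorem natCast_succ_pow_mul_two_pow_le_rpow {q s D : ℕ} (hq : 2 ≤ q) (hs : 2 ≤ s)
    (hD₁ : log s / (2 * log q) ≤ D) (hD₂ : D ≤ log s / (2 * log q) + 1) :
    (((s + 1) ^ (D * q ^ (D - 1)) * 2 ^ (s / D) : ℕ) : ℝ) ≤ (q : ℝ) ^ (3000 * s / log s) := by
  have hq' : (2 : ℝ) ≤ q := by exact_mod_cast hq
  have hs' : (2 : ℝ) ≤ s := by exact_mod_cast hs
  have hls : 0 < log s := log_pos (by linarith)
  have hsmall := natCast_mul_pow_mul_log_le hq' hs' hD₂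
  have hlarge := natCast_div_mul_log_two_le (by exact_mod_cast hq) hs hD₁
  rw [le_rpow_iff_log_le (by positivity) (by positivity), Nat.cast_mul, Nat.cast_pow,
    Nat.cast_pow, log_mul (by positivity) (by positivity), log_pow, log_pow, div_mul_eq_mul_div,
    le_div_iff₀ hls]
  push_cast
  nlinarith [log_pos (by linarith : (1 : ℝ) < q)]

/-- There is an absolute constant `c₀ > 0` such that for every finite
field `F` (with `q = #F` elements, a prime power) and every nonzero polynomial
`f ∈ F[T]` of degree `s ≥ 2`, the number of monic divisors of `f` in `F[T]` is at most
`q^(c₀ s / log s)`, where `log` is the natural logarithm. -/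
theorem count_monic_divisors_le :
    ∃ c₀ : ℝ, 0 < c₀ ∧
      ∀ (F : Type) [Field F] [Fintype F] (f : Polynomial F),
        f ≠ 0 → 2 ≤ f.natDegree →
        (Nat.card {g : Polynomial F // g.Monic ∧ g ∣ f} : ℝ) ≤
          (Fintype.card F : ℝ) ^
            (c₀ * (f.natDegree : ℝ) / Real.log (f.natDegree : ℝ)) := by
  refine ⟨3000, by norm_num, fun F _ _ f hf hs => ?_⟩
  have hq : 2 ≤ Fintype.card F := Fintype.one_lt_card
  have hx : 0 < log f.natDegree / (2 * log (Fintype.card F)) :=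
    div_pos (log_pos (by exact_mod_cast hs)) (mul_pos two_pos (log_pos (by exact_mod_cast hq)))
  set D := ⌈log f.natDegree / (2 * log (Fintype.card F))⌉₊
  calc (Nat.card {g : F[X] // g.Monic ∧ g ∣ f} : ℝ)
      ≤ (((f.natDegree + 1) ^ (D * Fintype.card F ^ (D - 1)) * 2 ^ (f.natDegree / D) : ℕ) : ℝ) :=
        by exact_mod_cast natCard_monic_dvd_le hf (Nat.ceil_pos.2 hx)
    _ ≤ _ := natCast_succ_pow_mul_two_pow_le_rpow hq hs (Nat.le_ceil _)
        (Nat.ceil_lt_add_one hx.le).le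
end

section
/- Let K be a field, S a finite subset of K, c ∈ K, and k ≥ 1 an integer. Let c₁,…,c_{2k} be nonzero elements of K. Let T_{2k} be the number of 2k-tuples (x₁,…,x_{2k}) ∈ S^{2k} with c₁x₁ + ⋯ + c_{2k}x_{2k} = c, and let J_{2k} be the number of 2k-tuples (x₁,…,x_{2k}) ∈ S^{2k} with x₁ + ⋯ + x_k = x_{k+1} + ⋯ + x_{2k}. Then T_{2k} ≤ J_{2k}. -/
/-!
Split the weights into two halves `a` and `b`. Grouping the solutions by the value `t` of
`∑ aᵢxᵢ` and applying Cauchy–Schwarz bounds the square of their number by `E(a) E(b)`, where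
`E(d)` counts pairs `x, y ∈ S^k` with `∑ dᵢxᵢ = ∑ dᵢyᵢ`; so it suffices that `E(d) ≤ E(1, …, 1)`.

Now `E(d)` itself counts solutions of a `2k`-variable equation, with weights `(d, -d)`. Cutting
these `2k` weights into two other halves (exchange `dⱼ` and `-dᵢ`) gives, by the same
Cauchy–Schwarz step, `E(d)² ≤ E(d') E(d'')`, and `E` is unchanged by flipping the sign of one
weight. Hence if `d` maximises `E` among weight vectors with entries in a finite set closed under
negation, so does `d` with `dⱼ` replaced by `dᵢ`. A maximiser with as many entries equal to `v`
as possible is therefore constant, and `E(v, …, v) = E(1, …, 1)` by scaling.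
-/

open Finset Function
open scoped Pointwise

section CauchySchwarz

variable {α β γ : Type*} [DecidableEq γ]

theorem card_filter_prod_eq_sum_mul (s : Finset α) (t : Finset β) (f : α → γ) (g : β → γ)
    {U : Finset γ} (hU : ∀ x ∈ s, f x ∈ U) :
    #{p ∈ s ×ˢ t | f p.1 = g p.2} = ∑ z ∈ U, #{x ∈ s | f x = z} * #{y ∈ t | g y = z} := by
  rw [card_eq_sum_card_fiberwise (f := fun p => f p.1) (t := U)
    fun p hp => hU _ (mem_product.1 (mem_filter.1 hp).1).1]
  refine sum_congr rfl fun z _ => ?_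
  rw [← card_product, ← filter_product, filter_filter]
  exact congrArg card (filter_congr fun p _ => by grind)

theorem card_filter_prod_sq_le (s : Finset α) (t : Finset β) (f : α → γ) (g : β → γ) :
    #{p ∈ s ×ˢ t | f p.1 = g p.2} ^ 2 ≤
      #{p ∈ s ×ˢ s | f p.1 = f p.2} * #{p ∈ t ×ˢ t | g p.1 = g p.2} := by
  set U := s.image f ∪ t.image g
  have hs : ∀ x ∈ s, f x ∈ U := fun x hx => mem_union_left _ (mem_image_of_mem f hx)
  have ht : ∀ y ∈ t, g y ∈ U := fun y hy => mem_union_right _ (mem_image_of_mem g hy)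
  rw [card_filter_prod_eq_sum_mul s t f g hs, card_filter_prod_eq_sum_mul s s f f hs,
    card_filter_prod_eq_sum_mul t t g g ht]
  simpa only [sq] using
    sum_mul_sq_le_sq_mul_sq U (fun z => #{x ∈ s | f x = z}) fun z => #{y ∈ t | g y = z}

end CauchySchwarz

theorem card_filter_update_eq_add_one {ι α : Type*} [Fintype ι] [DecidableEq ι] [DecidableEq α]
    (f : ι → α) {j : ι} {a : α} (hj : f j ≠ a) :
    #{i | update f j a i = a} = #{i | f i = a} + 1 := by
  rw [← card_insert_of_notMem (s := {i | f i = a}) (by simpa using hj)]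
  congr 1
  ext i
  by_cases h : i = j <;> simp [h]

theorem sumElim_neg_comp_swap {K ι : Type*} [Ring K] [DecidableEq ι] (d : ι → K) (i j : ι) :
    Sum.elim d (-d) ∘ Equiv.swap (Sum.inl i) (Sum.inr j) =
      Sum.elim (update d i (-d j)) (update (-d) j (d i)) := by
  ext (p | p) <;> simp [Equiv.swap_apply_def, update_apply] <;> split_ifs <;> simp_all

section Energy

variable {K ι κ : Type*} [CommRing K] (S : Finset K) [Fintype ι] [Fintype κ]

noncomputable def solCount (w : ι → K) (c : K) : ℕ :=
  Nat.card {x : ι → K // (∀ i, x i ∈ S) ∧ ∑ i, w i * x i = c}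

/-- Defined through the equation with weights `(d, -d)` in `ι ⊕ ι` variables (rather than by
`energy_eq_card`), so that permuting `ι ⊕ ι` can mix the two halves. -/
noncomputable def energy (d : ι → K) : ℕ :=
  solCount S (Sum.elim d (-d)) 0

theorem solCount_comp_equiv (e : ι ≃ κ) (w : κ → K) (c : K) :
    solCount S (w ∘ e) c = solCount S w c :=
  Nat.card_congr <| (e.arrowCongr (Equiv.refl K)).subtypeEquiv fun _ =>
    and_congr e.forall_congr_left (by simp [← e.sum_comp])

theorem solCount_sumElim [DecidableEq ι] [DecidableEq κ] [DecidableEq K] (a : ι → K)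
    (b : κ → K) (c : K) :
    solCount S (Sum.elim a b) c =
      #{p ∈ Fintype.piFinset (fun _ => S) ×ˢ Fintype.piFinset (fun _ => S) |
        ∑ i, a i * p.1 i = c - ∑ j, b j * p.2 j} := by
  rw [← Nat.card_eq_finsetCard]
  exact Nat.card_congr <| (Equiv.sumArrowEquivProdArrow ι κ K).subtypeEquiv fun x => by
    simp [Fintype.sum_sum_type, eq_sub_iff_add_eq, Sum.forall]

theorem energy_eq_card [DecidableEq ι] [DecidableEq K] (d : ι → K) :
    energy S d = #{p ∈ Fintype.piFinset (fun _ => S) ×ˢ Fintype.piFinset (fun _ => S) |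
        ∑ i, d i * p.1 i = ∑ i, d i * p.2 i} := by
  simp [energy, solCount_sumElim]

theorem solCount_sumElim_sq_le (a : ι → K) (b : κ → K) (c : K) :
    solCount S (Sum.elim a b) c ^ 2 ≤ energy S a * energy S b := by
  classical
  rw [solCount_sumElim, energy_eq_card, energy_eq_card]
  convert card_filter_prod_sq_le (Fintype.piFinset fun _ => S) (Fintype.piFinset fun _ => S)
    (fun x : ι → K => ∑ i, a i * x i) (fun y : κ → K => c - ∑ j, b j * y j) using 3
  simp

theorem energy_sq_le_energy_update_mul [DecidableEq ι] (d : ι → K) (i j : ι) :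
    energy S d ^ 2 ≤ energy S (update d i (-d j)) * energy S (update (-d) j (d i)) := by
  rw [energy, ← solCount_comp_equiv S (Equiv.swap (Sum.inl i) (Sum.inr j)),
    sumElim_neg_comp_swap]
  exact solCount_sumElim_sq_le S _ _ 0

theorem energy_update_neg [DecidableEq ι] (d : ι → K) (i : ι) (u : K) :
    energy S (update d i (-u)) = energy S (update d i u) := by
  set d' := update d i u
  have hflip : update (-d') i (d' i) = -update d' i (-d' i) := by
    ext j; by_cases h : j = i <;> simp [h, d']
  have hd : update d i (-u) = update d' i (-d' i) := by simp [d']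
  unfold energy
  rw [hd, ← solCount_comp_equiv S (Equiv.swap (Sum.inl i) (Sum.inr i)) (Sum.elim d' (-d')),
    sumElim_neg_comp_swap, hflip]

theorem energy_le_energy_update [DecidableEq ι] {V : Finset K} (hV : ∀ v ∈ V, -v ∈ V)
    {d : ι → K} (hd : ∀ i, d i ∈ V)
    (hmax : ∀ d' : ι → K, (∀ i, d' i ∈ V) → energy S d' ≤ energy S d) (i j : ι) :
    energy S d ≤ energy S (update d j (d i)) := by
  rcases Nat.eq_zero_or_pos (energy S d) with h0 | hpos
  · exact h0 ▸ Nat.zero_le _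
  have hmem : ∀ l, update (-d) i (d j) l ∈ V :=
    (forall_update_iff _ fun _ y => y ∈ V).2 ⟨hd j, fun l _ => hV _ (hd l)⟩
  refine Nat.le_of_mul_le_mul_right ?_ hpos
  calc energy S d * energy S d = energy S d ^ 2 := (sq _).symm
    _ ≤ energy S (update d j (-d i)) * energy S (update (-d) i (d j)) :=
        energy_sq_le_energy_update_mul S d j i
    _ ≤ energy S (update d j (d i)) * energy S d := by
        rw [energy_update_neg]
        exact Nat.mul_le_mul_left _ (hmax _ hmem)

variable [IsDomain K]

theorem energy_smul {u : K} (hu : u ≠ 0) (d : ι → K) : energy S (u • d) = energy S d := by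
  classical
  simp only [energy_eq_card, Pi.smul_apply, smul_eq_mul, mul_assoc, ← mul_sum,
    mul_right_inj' hu]

theorem energy_le_energy_one_of_forall_mem [DecidableEq ι] {V : Finset K} (hV0 : (0 : K) ∉ V)
    (hV : ∀ v ∈ V, -v ∈ V) {d : ι → K} (hd : ∀ i, d i ∈ V) :
    energy S d ≤ energy S (1 : ι → K) := by
  classical
  rcases isEmpty_or_nonempty ι with hι | ⟨⟨i₀⟩⟩
  · rw [Subsingleton.elim d 1]
  obtain ⟨d₀, hd₀, hd₀max⟩ :=
    (Fintype.piFinset fun _ : ι => V).exists_max_image (energy S) ⟨d, by simpa using hd⟩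
  simp only [Fintype.mem_piFinset] at hd₀ hd₀max
  set v := d₀ i₀
  obtain ⟨d₁, hd₁, hd₁max⟩ := {d' ∈ Fintype.piFinset fun _ : ι => V | energy S d₀ ≤ energy S d'}
    |>.exists_max_image (fun d' => #{i | d' i = v}) ⟨d₀, by simpa using hd₀⟩
  simp only [mem_filter, Fintype.mem_piFinset, and_imp] at hd₁ hd₁max
  have hconst : d₁ = fun _ => v := by
    by_contra hne
    obtain ⟨j, hj⟩ : ∃ j, d₁ j ≠ v := by simpa [funext_iff] using hne
    obtain ⟨i, hi⟩ : ∃ i, d₁ i = v := by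
      have : 0 < #{i | d₀ i = v} := card_pos.2 ⟨i₀, by simp [v]⟩
      simpa [card_pos, filter_nonempty_iff] using this.trans_le (hd₁max d₀ hd₀ le_rfl)
    have hup := hd₁max (update d₁ j v)
      ((forall_update_iff _ fun _ y => y ∈ V).2 ⟨hi ▸ hd₁.1 i, fun l _ => hd₁.1 l⟩)
      (hd₁.2.trans (hi ▸ energy_le_energy_update S hV hd₁.1
        (fun d' hd' => (hd₀max d' hd').trans hd₁.2) i j))
    rw [card_filter_update_eq_add_one d₁ hj] at hup
    omega
  have hv : v ≠ 0 := fun h => hV0 (h ▸ hd₀ i₀)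
  calc energy S d ≤ energy S d₀ := hd₀max d hd
    _ ≤ energy S d₁ := hd₁.2
    _ = energy S 1 := by
        rw [hconst, show (fun _ : ι => v) = v • (1 : ι → K) by ext; simp, energy_smul S hv]

theorem energy_le_energy_one [DecidableEq ι] {d : ι → K} (hd : ∀ i, d i ≠ 0) :
    energy S d ≤ energy S (1 : ι → K) := by
  classical
  refine energy_le_energy_one_of_forall_mem S (V := univ.image d ∪ -univ.image d) ?_ ?_ ?_
  · simpa using hd
  · intro v hv
    rw [mem_union, mem_neg'] at hv ⊢
    rw [neg_neg]
    exact hv.symm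
  · exact fun i => mem_union_left _ (mem_image_of_mem d (mem_univ i))

end Energy

section SplitFinTwoMul

def finSumFinEquivTwoMul (k : ℕ) : Fin k ⊕ Fin k ≃ Fin (2 * k) :=
  finSumFinEquiv.trans (finCongr (two_mul k).symm)

variable {M : Type*} [AddCommMonoid M] (k : ℕ) (x : Fin (2 * k) → M)

theorem sum_filter_lt_eq_sum_inl :
    ∑ i ∈ univ.filter (fun i : Fin (2 * k) => (i : ℕ) < k), x i =
      ∑ j : Fin k, x (finSumFinEquivTwoMul k (Sum.inl j)) := by
  rw [sum_filter, ← (finSumFinEquivTwoMul k).sum_comp, Fintype.sum_sum_type]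
  simp [finSumFinEquivTwoMul]

theorem sum_filter_not_lt_eq_sum_inr :
    ∑ i ∈ univ.filter (fun i : Fin (2 * k) => ¬ (i : ℕ) < k), x i =
      ∑ j : Fin k, x (finSumFinEquivTwoMul k (Sum.inr j)) := by
  rw [sum_filter, ← (finSumFinEquivTwoMul k).sum_comp, Fintype.sum_sum_type]
  simp [finSumFinEquivTwoMul]

end SplitFinTwoMul

theorem energy_one_eq_card {K : Type*} [CommRing K] (S : Finset K) (k : ℕ) :
    energy S (1 : Fin k → K) = Nat.card {x : Fin (2 * k) → K // (∀ i, x i ∈ S) ∧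
      ∑ i ∈ univ.filter (fun i : Fin (2 * k) => (i : ℕ) < k), x i =
        ∑ i ∈ univ.filter (fun i : Fin (2 * k) => ¬ (i : ℕ) < k), x i} := by
  rw [energy, ← solCount_comp_equiv S (finSumFinEquivTwoMul k).symm]
  refine Nat.card_congr (Equiv.subtypeEquivRight fun x => and_congr_right fun _ => ?_)
  rw [sum_filter_lt_eq_sum_inl, sum_filter_not_lt_eq_sum_inr, ← sub_eq_zero (b := ∑ j, _),
    ← (finSumFinEquivTwoMul k).sum_comp, Fintype.sum_sum_type]
  simp [sub_eq_add_neg]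

theorem weighted_solutions_le_energy_even_general
    (K : Type) [Field K] (S : Finset K) (c : K) (k : ℕ)
    (cs : Fin (2 * k) → K) (hcs : ∀ i, cs i ≠ 0) :
    Nat.card {x : Fin (2 * k) → K //
        (∀ i, x i ∈ S) ∧ ∑ i, cs i * x i = c} ≤
      Nat.card {x : Fin (2 * k) → K //
        (∀ i, x i ∈ S) ∧
        ∑ i ∈ Finset.univ.filter (fun i : Fin (2 * k) => (i : ℕ) < k), x i =
          ∑ i ∈ Finset.univ.filter (fun i : Fin (2 * k) => ¬ (i : ℕ) < k), x i} := by
  change solCount S cs c ≤ _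
  rw [← energy_one_eq_card]
  have hsq : solCount S cs c ^ 2 ≤ energy S (1 : Fin k → K) ^ 2 := by
    rw [← solCount_comp_equiv S (finSumFinEquivTwoMul k),
      ← Sum.elim_comp_inl_inr (cs ∘ finSumFinEquivTwoMul k), sq (energy S 1)]
    exact (solCount_sumElim_sq_le S _ _ c).trans <| Nat.mul_le_mul
      (energy_le_energy_one S fun _ => hcs _) (energy_le_energy_one S fun _ => hcs _)
  exact (Nat.pow_le_pow_iff_left two_ne_zero).1 hsq

/-- Let `K` be a field, `S` a finite subset of `K`, `c ∈ K`, and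
`k ≥ 1` an integer. Let `c₁, …, c_{2k}` be nonzero elements of `K`. Let `T_{2k}` be
the number of `2k`-tuples `(x₁, …, x_{2k}) ∈ S^{2k}` with `c₁x₁ + ⋯ + c_{2k}x_{2k} = c`,
and let `J_{2k}` be the number of `2k`-tuples `(x₁, …, x_{2k}) ∈ S^{2k}` with
`x₁ + ⋯ + x_k = x_{k+1} + ⋯ + x_{2k}`. Then `T_{2k} ≤ J_{2k}`. -/
theorem weighted_solutions_le_energy_even
    (K : Type) [Field K] (S : Finset K) (c : K) (k : ℕ) (hk : 1 ≤ k)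
    (cs : Fin (2 * k) → K) (hcs : ∀ i, cs i ≠ 0) :
    Nat.card {x : Fin (2 * k) → K //
        (∀ i, x i ∈ S) ∧ ∑ i, cs i * x i = c} ≤
      Nat.card {x : Fin (2 * k) → K //
        (∀ i, x i ∈ S) ∧
        ∑ i ∈ Finset.univ.filter (fun i : Fin (2 * k) => (i : ℕ) < k), x i =
          ∑ i ∈ Finset.univ.filter (fun i : Fin (2 * k) => ¬ (i : ℕ) < k), x i} :=
  weighted_solutions_le_energy_even_general K S c k cs hcs
end

section
/- Let F be a finite field, χ a (possibly trivial) additive character of F, U and V finite subsets of F, k ≥ 1 an integer, and α : V → ℂ a weight function with |α(v)| ≤ 1 for all v ∈ V. Then Σ_{u∈U} | Σ_{v∈V} α(v) χ(uv) |^{2k} ≤ Σ_{(v₁,…,v_{2k})∈V^{2k}} | Σ_{u∈U} χ( u · Σ_{i=1}^{2k} (−1)^i v_i ) |. -/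
/-!
Write `S u = ∑ v ∈ V, α v * χ (u * v)`. Since `F` is finite, `χ` takes values on the unit circle and
`conj (χ x) = χ (-x)`; so `|S u| ^ (2k) = (conj (S u) * S u) ^ k`, expanded as a product of
`2k` sums over `V`, becomes a sum over `V ^ (2k)` of weights of modulus at most `1` times
`χ (u * ∑ i, ± vᵢ)`. Summing over `u ∈ U` and applying the triangle inequality in the
`V ^ (2k)`-sum gives the bound.
-/

open Finset

lemma AddChar.map_sum_eq_prod {A M ι : Type*} [AddCommMonoid A] [CommMonoid M]
    (ψ : AddChar A M) (s : Finset ι) (f : ι → A) :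
    ψ (∑ i ∈ s, f i) = ∏ i ∈ s, ψ (f i) := by
  classical
  induction s using Finset.cons_induction with
  | empty => simp
  | cons a s _ ih => rw [sum_cons, prod_cons, map_add_eq_mul, ih]

lemma norm_sum_mul_le_sum_norm {E ι : Type*} [SeminormedRing E] (s : Finset ι) (w z : ι → E)
    (hw : ∀ i ∈ s, ‖w i‖ ≤ 1) :
    ‖∑ i ∈ s, w i * z i‖ ≤ ∑ i ∈ s, ‖z i‖ :=
  (norm_sum_le _ _).trans <| sum_le_sum fun i hi =>
    (norm_mul_le _ _).trans <| mul_le_of_le_one_left (norm_nonneg _) (hw i hi)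

/-- Conjugation at the (zero-based) even indices `i`, where the sign `(-1) ^ (i + 1)` is `-1`. -/
def altConj (i : ℕ) : ℂ →+* ℂ :=
  if Even i then starRingEnd ℂ else RingHom.id ℂ

lemma norm_altConj (i : ℕ) (z : ℂ) : ‖altConj i z‖ = ‖z‖ := by
  unfold altConj
  split_ifs <;> simp

lemma prod_altConj_eq_norm_pow (k : ℕ) (z : ℂ) :
    ∏ i : Fin (2 * k), altConj i z = ((‖z‖ ^ (2 * k) : ℝ) : ℂ) := by
  rw [Fin.prod_univ_eq_prod_range (fun i => altConj i z)]
  induction k with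
  | zero => simp
  | succ k ih =>
    have h2k : Even (2 * k) := even_two_mul k
    rw [Nat.mul_succ, prod_range_succ, prod_range_succ, ih]
    simp only [altConj, if_pos h2k, if_neg (Nat.not_even_iff_odd.mpr h2k.add_one),
      RingHom.id_apply]
    rw [mul_assoc, Complex.conj_mul']
    push_cast
    ring

lemma AddChar.altConj_eq_map_neg_one_pow_mul {R : Type*} [Ring R] [Finite R]
    (ψ : AddChar R ℂ) (i : ℕ) (x : R) :
    altConj i (ψ x) = ψ ((-1) ^ (i + 1) * x) := by
  unfold altConj
  rcases Nat.even_or_odd i with hi | hi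
  · simp [hi, hi.add_one.neg_one_pow, AddChar.map_neg_eq_conj]
  · simp [Nat.not_even_iff_odd.mpr hi, hi.add_one.neg_one_pow]

lemma AddChar.prod_altConj_sum_eq_sum_piFinset {R : Type*} [CommRing R] [Finite R]
    (ψ : AddChar R ℂ) (n : ℕ) (V : Finset R) (α : R → ℂ) (u : R) :
    ∏ i : Fin n, altConj i (∑ v ∈ V, α v * ψ (u * v)) =
      ∑ p ∈ Fintype.piFinset (fun _ : Fin n => V),
        (∏ i : Fin _, altConj i (α (p i))) * ψ (u * ∑ i : Fin n, (-1) ^ ((i : ℕ) + 1) * p i) := by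
  calc ∏ i : Fin n, altConj i (∑ v ∈ V, α v * ψ (u * v))
      = ∏ i : Fin n, ∑ v ∈ V, altConj i (α v) * ψ (u * ((-1) ^ ((i : ℕ) + 1) * v)) := by
        simp_rw [map_sum, map_mul, altConj_eq_map_neg_one_pow_mul, mul_left_comm]
    _ = ∑ p ∈ Fintype.piFinset (fun _ : Fin n => V),
          ∏ i : Fin _, altConj i (α (p i)) * ψ (u * ((-1) ^ ((i : ℕ) + 1) * p i)) :=
        prod_univ_sum _ _
    _ = _ := by simp_rw [prod_mul_distrib, mul_sum, map_sum_eq_prod]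

theorem holder_amplification_additive_characters_general
    (F : Type) [Field F] [Fintype F] (χ : AddChar F ℂ)
    (U V : Finset F) (k : ℕ)
    (α : F → ℂ) (hα : ∀ v ∈ V, ‖α v‖ ≤ 1) :
    ∑ u ∈ U, ‖∑ v ∈ V, α v * χ (u * v)‖ ^ (2 * k) ≤
      ∑ v ∈ Fintype.piFinset (fun _ : Fin (2 * k) => V),
        ‖∑ u ∈ U,
          χ (u * ∑ i : Fin (2 * k), (-1 : F) ^ ((i : ℕ) + 1) * v i)‖ := by
  have hweight : ∀ p ∈ Fintype.piFinset (fun _ : Fin (2 * k) => V),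
      ‖∏ i : Fin _, altConj i (α (p i))‖ ≤ 1 := fun p hp => by
    rw [norm_prod]
    exact prod_le_one (fun _ _ => norm_nonneg _) fun i _ =>
      (norm_altConj _ _).trans_le (hα _ (Fintype.mem_piFinset.mp hp i))
  calc ∑ u ∈ U, ‖∑ v ∈ V, α v * χ (u * v)‖ ^ (2 * k)
      = ‖∑ u ∈ U, ((‖∑ v ∈ V, α v * χ (u * v)‖ ^ (2 * k) : ℝ) : ℂ)‖ := by
        rw [← Complex.ofReal_sum, Complex.norm_of_nonneg (by positivity)]
    _ = ‖∑ p ∈ Fintype.piFinset (fun _ : Fin (2 * k) => V), (∏ i : Fin _, altConj i (α (p i))) *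
          ∑ u ∈ U, χ (u * ∑ i : Fin (2 * k), (-1 : F) ^ ((i : ℕ) + 1) * p i)‖ := by
        simp_rw [← prod_altConj_eq_norm_pow, χ.prod_altConj_sum_eq_sum_piFinset, mul_sum]
        rw [sum_comm]
    _ ≤ _ := norm_sum_mul_le_sum_norm _ _ _ hweight

/-- Let `F` be a finite field, `χ` a (possibly trivial) additive
character of `F` valued in the unit circle of `ℂ`, `U` and `V` finite subsets of `F`,
`k ≥ 1` an integer, and `α : V → ℂ` a weight function with `|α(v)| ≤ 1` for all
`v ∈ V`. Then
`Σ_{u∈U} |Σ_{v∈V} α(v) χ(uv)|^{2k}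
  ≤ Σ_{(v₁,…,v_{2k})∈V^{2k}} |Σ_{u∈U} χ(u · Σ_{i=1}^{2k} (−1)^i vᵢ)|`
(with zero-based indices `i : Fin 2k`, the sign of `vᵢ` is `(−1)^{i+1}`). -/
theorem holder_amplification_additive_characters
    (F : Type) [Field F] [Fintype F] (χ : AddChar F ℂ)
    (hχ : ∀ x, ‖χ x‖ = 1)
    (U V : Finset F) (k : ℕ) (hk : 1 ≤ k)
    (α : F → ℂ) (hα : ∀ v ∈ V, ‖α v‖ ≤ 1) :
    ∑ u ∈ U, ‖∑ v ∈ V, α v * χ (u * v)‖ ^ (2 * k) ≤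
      ∑ v ∈ Fintype.piFinset (fun _ : Fin (2 * k) => V),
        ‖∑ u ∈ U,
          χ (u * ∑ i : Fin (2 * k), (-1 : F) ^ ((i : ℕ) + 1) * v i)‖ :=
  holder_amplification_additive_characters_general F χ U V k α hα
end

section
/- Let q be a prime power, k ≥ 2 an integer, and let x₁,…,x_{2k} be pairwise distinct polynomials in F_q[T]. Suppose β is an element of the algebraic closure of F_q(T) satisfying Σ_{s=1}^{k} Π_{i≠s} (x_i + β) = Σ_{s=k+1}^{2k} Π_{i≠s} (x_i + β), where each product runs over all indices i ∈ {1,…,2k} with i ≠ s. Then β is algebraic over F_q(T) of degree at most 2k − 2. -/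
/-- The canonical embedding of the polynomial ring `F[T]` into the algebraic closure
of the rational function field `F(T)`. -/
noncomputable def polyToAlgClosure (F : Type) [Field F] (x : Polynomial F) :
    AlgebraicClosure (RatFunc F) :=
  algebraMap (RatFunc F) (AlgebraicClosure (RatFunc F))
    (algebraMap (Polynomial F) (RatFunc F) x)

/-- Let `F` be a finite field (with `q` elements), `k ≥ 2` an
integer, and `x₁, …, x_{2k}` pairwise distinct polynomials in `F[T]`. Suppose `β` is
an element of the algebraic closure of `F(T)` satisfying
`Σ_{s=1}^{k} Π_{i≠s} (xᵢ + β) = Σ_{s=k+1}^{2k} Π_{i≠s} (xᵢ + β)`,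
where each product runs over all indices `i ∈ {1, …, 2k}` with `i ≠ s`. Then `β` is
algebraic over `F(T)` of degree at most `2k − 2`. -/
theorem beta_algebraic_of_degree_le
    (F : Type) [Field F] [Fintype F] (k : ℕ) (hk : 2 ≤ k)
    (x : Fin (2 * k) → Polynomial F) (hx : Function.Injective x)
    (β : AlgebraicClosure (RatFunc F))
    (heq :
      ∑ s ∈ Finset.univ.filter (fun s : Fin (2 * k) => (s : ℕ) < k),
          ∏ i ∈ Finset.univ.erase s, (polyToAlgClosure F (x i) + β) =
        ∑ s ∈ Finset.univ.filter (fun s : Fin (2 * k) => ¬ (s : ℕ) < k),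
          ∏ i ∈ Finset.univ.erase s, (polyToAlgClosure F (x i) + β)) :
    IsIntegral (RatFunc F) β ∧ (minpoly (RatFunc F) β).natDegree ≤ 2 * k - 2 := by
  classical
  set R := RatFunc F
  set c : Fin (2 * k) → R := fun i => algebraMap (Polynomial F) R (x i) with hc
  have hcinj : Function.Injective c :=
    (IsFractionRing.injective (Polynomial F) R).comp hx
  set A := Finset.univ.filter (fun s : Fin (2 * k) => (s : ℕ) < k) with hA
  set B := Finset.univ.filter (fun s : Fin (2 * k) => ¬ (s : ℕ) < k) with hB
  set Q : Fin (2 * k) → Polynomial R := fun s =>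
    ∏ i ∈ Finset.univ.erase s, (Polynomial.X + Polynomial.C (c i)) with hQ
  set P : Polynomial R := (∑ s ∈ A, Q s) - (∑ s ∈ B, Q s) with hP
  have hQmonic : ∀ s, (Q s).Monic := fun s =>
    Polynomial.monic_prod_of_monic _ _ fun i _ => Polynomial.monic_X_add_C _
  have hQdeg : ∀ s, (Q s).natDegree = 2 * k - 1 := by
    intro s
    rw [hQ]
    rw [Polynomial.natDegree_prod _ _ (fun i _ => (Polynomial.monic_X_add_C _).ne_zero)]
    simp [Finset.card_erase_of_mem]
  -- cardinalities
  have hkpos : 0 < 2 * k := by omega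
  have hAcard : A.card = k := by
    have : A = Finset.Iio (⟨k, by omega⟩ : Fin (2 * k)) := by
      ext s
      simp [hA, Finset.mem_Iio, Fin.lt_def]
    rw [this, Fin.card_Iio]
  have hBcard : B.card = k := by
    have := Finset.card_filter_add_card_filter_not
      (s := (Finset.univ : Finset (Fin (2 * k))))
      (p := fun s : Fin (2 * k) => (s : ℕ) < k)
    simp only [Finset.card_univ, Fintype.card_fin] at this
    rw [← hA, ← hB] at this
    omega
  -- degree bound
  have hPdeg : P.natDegree ≤ 2 * k - 2 := by
    rw [Polynomial.natDegree_le_iff_coeff_eq_zero]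
    intro N hN
    rw [hP, Polynomial.coeff_sub, Polynomial.finset_sum_coeff, Polynomial.finset_sum_coeff]
    rcases Nat.lt_or_ge (2 * k - 1) N with h | h
    · rw [Finset.sum_eq_zero, Finset.sum_eq_zero, sub_zero]
      all_goals exact fun s _ => Polynomial.coeff_eq_zero_of_natDegree_lt (by rw [hQdeg]; omega)
    · have hN' : N = 2 * k - 1 := by omega
      subst hN'
      have hcoeff : ∀ s, (Q s).coeff (2 * k - 1) = 1 := by
        intro s
        have := (hQmonic s).coeff_natDegree
        rwa [hQdeg] at this
      simp only [hcoeff, Finset.sum_const, nsmul_eq_mul, mul_one, hAcard, hBcard, sub_self]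
  -- β is a root of P
  have haeval : Polynomial.aeval β P = 0 := by
    rw [hP, map_sub, map_sum, map_sum]
    have : ∀ s : Fin (2 * k), Polynomial.aeval β (Q s) =
        ∏ i ∈ Finset.univ.erase s, (polyToAlgClosure F (x i) + β) := by
      intro s
      rw [hQ, map_prod]
      refine Finset.prod_congr rfl fun i _ => ?_
      simp only [map_add, Polynomial.aeval_X, Polynomial.aeval_C]
      rw [add_comm]
      rfl
    simp only [this]
    rw [heq, sub_self]
  -- P ≠ 0
  have hPne : P ≠ 0 := by
    intro h0
    set j : Fin (2 * k) := ⟨0, hkpos⟩ with hj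
    have hjA : j ∈ A := by simp [hA, hj]; omega
    have heval := congrArg (Polynomial.eval (-(c j))) h0
    rw [hP, Polynomial.eval_sub, Polynomial.eval_zero, Polynomial.eval_finset_sum,
      Polynomial.eval_finset_sum] at heval
    have hQeval : ∀ s : Fin (2 * k), (Q s).eval (-(c j)) =
        ∏ i ∈ Finset.univ.erase s, (-(c j) + c i) := by
      intro s
      rw [hQ, Polynomial.eval_prod]
      exact Finset.prod_congr rfl fun i _ => by simp
    have hzero : ∀ s : Fin (2 * k), s ≠ j → (Q s).eval (-(c j)) = 0 := by
      intro s hs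
      rw [hQeval]
      exact Finset.prod_eq_zero (Finset.mem_erase.mpr ⟨hs.symm, Finset.mem_univ j⟩)
        (by ring)
    rw [Finset.sum_eq_single j (fun s _ hs => hzero s hs) (fun h => absurd hjA h),
      Finset.sum_eq_zero (fun s hsB => hzero s (by
        intro h; subst h
        simp [hB, hj] at hsB; omega))] at heval
    rw [sub_zero, hQeval] at heval
    have : ∀ i ∈ Finset.univ.erase j, (-(c j) + c i) ≠ 0 := by
      intro i hi
      have hij : i ≠ j := (Finset.mem_erase.mp hi).1
      intro hzero'
      rw [neg_add_eq_zero] at hzero'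
      exact hij (hcinj hzero'.symm)
    exact Finset.prod_ne_zero_iff.mpr this heval
  have halg : IsAlgebraic R β := ⟨P, hPne, haeval⟩
  have hint : IsIntegral R β := halg.isIntegral
  refine ⟨hint, ?_⟩
  have hdle := minpoly.degree_le_of_ne_zero R β hPne haeval
  exact le_trans (Polynomial.natDegree_le_natDegree hdle) hPdeg
end
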